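/- arXiv:1112.5060 — 2 statements merged into one kernel-verified Lean document; each statement's English description precedes it below -/
import Mathlib

section
/- Let M be a topological space and let d : M × M → ℝ be a continuous quasimetric on M, and fix a point p ∈ M. Then the following are equivalent: (i) for every c ∈ ℝ the set {x ∈ M | d(p,x) + d(x,p) ≤ c} is compact; (ii) there exists a continuous function g : M → ℝ satisfying d(x,y) + g(y) − g(x) ≥ 0 for all x, y ∈ M, such that for every r ∈ ℝ both sets {x ∈ M | d(p,x) + g(x) − g(p) ≤ r} and {x ∈ M | d(x,p) + g(p) − g(x) ≤ r} are compact. (This is the continuous/Lipschitz version of the paper's main Theorem 1: a Finsler-type distance can be made forward and backward complete by a trivial projective change if and only if D⁺ + D⁻ is proper.) -/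
/-- The main Theorem 1 (continuous/Lipschitz version): for a continuous quasimetric `d`
on a topological space `M` with base point `p`, the sublevel sets of `D⁺ + D⁻` are all
compact iff there is a continuous trivial projective change that is forward and backward
proper. -/
theorem stmt_0 {M : Type*} [TopologicalSpace M] (d : M → M → ℝ)
    (hcont : Continuous fun q : M × M => d q.1 q.2)
    (hnonneg : ∀ x y : M, 0 ≤ d x y) (hrefl : ∀ x : M, d x x = 0)
    (htri : ∀ x y z : M, d x z ≤ d x y + d y z) (p : M) :
    (∀ c : ℝ, IsCompact {x : M | d p x + d x p ≤ c}) ↔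
      ∃ g : M → ℝ, Continuous g ∧ (∀ x y : M, 0 ≤ d x y + g y - g x) ∧
        ∀ r : ℝ, IsCompact {x : M | d p x + g x - g p ≤ r} ∧
          IsCompact {x : M | d x p + g p - g x ≤ r} := by
  have hcont1 : Continuous fun x : M => d p x :=
    hcont.comp (continuous_const.prodMk continuous_id)
  have hcont2 : Continuous fun x : M => d x p :=
    hcont.comp (continuous_id.prodMk continuous_const)
  constructor
  · intro hc
    refine ⟨fun x => (d x p - d p x) / 2, ((hcont2.sub hcont1).div_const 2), ?_, ?_⟩
    · intro x y
      have h1 : d x p ≤ d x y + d y p := htri x y p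
      have h2 : d p y ≤ d p x + d x y := htri p x y
      nlinarith
    · intro r
      have hpp : d p p = 0 := hrefl p
      constructor
      · have : {x : M | d p x + (d x p - d p x) / 2 - (d p p - d p p) / 2 ≤ r}
            = {x : M | d p x + d x p ≤ 2 * r} := by
          ext x; simp only [Set.mem_setOf_eq]; constructor <;> intro h <;> linarith
        rw [this]; exact hc (2 * r)
      · have : {x : M | d x p + (d p p - d p p) / 2 - (d x p - d p x) / 2 ≤ r}
            = {x : M | d p x + d x p ≤ 2 * r} := by
          ext x; simp only [Set.mem_setOf_eq]; constructor <;> intro h <;> linarith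
        rw [this]; exact hc (2 * r)
  · rintro ⟨g, hg, hpos, hcomp⟩ c
    have hclosed : IsClosed {x : M | d p x + d x p ≤ c} :=
      isClosed_le (hcont1.add hcont2) continuous_const
    refine ((hcomp c).1.of_isClosed_subset hclosed ?_)
    intro x hx
    simp only [Set.mem_setOf_eq] at hx ⊢
    have h1 : 0 ≤ d p x + g x - g p := hpos p x
    have h2 : 0 ≤ d x p + g p - g x := hpos x p
    linarith
end

section
/- Let M be a topological space, d : M × M → ℝ a continuous quasimetric, and p ∈ M, and suppose that for every c ∈ ℝ the set {x ∈ M | d(p,x) + d(x,p) ≤ c} is compact. Define g : M → ℝ by g(x) = (d(x,p) − d(p,x))/4. Then g is continuous, d(x,y) + g(y) − g(x) ≥ (1/2)·d(x,y) ≥ 0 for all x, y ∈ M, and for every r ∈ ℝ the sets {x ∈ M | d(p,x) + g(x) − g(p) ≤ r} and {x ∈ M | d(x,p) + g(p) − g(x) ≤ r} are compact. -/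
/-- The "if" direction of Theorem 1 with the explicit function
`g = (D⁻ - D⁺)/4`: it is continuous, the corresponding trivial projective change
dominates `d/2` (in particular is nonnegative), and its forward and backward balls
around `p` are compact. -/
theorem stmt_2 {M : Type*} [TopologicalSpace M] (d : M → M → ℝ)
    (hcont : Continuous fun q : M × M => d q.1 q.2)
    (hnonneg : ∀ x y : M, 0 ≤ d x y) (hrefl : ∀ x : M, d x x = 0)
    (htri : ∀ x y z : M, d x z ≤ d x y + d y z) (p : M)
    (hproper : ∀ c : ℝ, IsCompact {x : M | d p x + d x p ≤ c}) :
    Continuous (fun x : M => (d x p - d p x) / 4) ∧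
      (∀ x y : M,
        (1 / 2) * d x y ≤
          d x y + (d y p - d p y) / 4 - (d x p - d p x) / 4 ∧
        0 ≤ (1 / 2) * d x y) ∧
      ∀ r : ℝ,
        IsCompact {x : M | d p x + (d x p - d p x) / 4 - (d p p - d p p) / 4 ≤ r} ∧
        IsCompact {x : M | d x p + (d p p - d p p) / 4 - (d x p - d p x) / 4 ≤ r} := by
  have hc1 : Continuous fun x : M => d x p :=
    hcont.comp (continuous_id.prodMk continuous_const)
  have hc2 : Continuous fun x : M => d p x :=
    hcont.comp (continuous_const.prodMk continuous_id)
  refine ⟨((hc1.sub hc2).div_const 4), ?_, ?_⟩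
  · intro x y
    have h0 := hnonneg x y
    refine ⟨?_, by linarith⟩
    have h1 := htri x y p
    have h2 := htri p x y
    linarith
  · intro r
    constructor
    · apply IsCompact.of_isClosed_subset (hproper (4 * r))
      · exact isClosed_le (by fun_prop) continuous_const
      · intro x hx
        simp only [Set.mem_setOf_eq, hrefl] at *
        have := hnonneg p x
        linarith
    · apply IsCompact.of_isClosed_subset (hproper (4 * r))
      · exact isClosed_le (by fun_prop) continuous_const
      · intro x hx
        simp only [Set.mem_setOf_eq, hrefl] at *
        have := hnonneg x p
        linarith
end
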